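/- The 1-Wasserstein distance between two centered normal distributions N(0, σ₁²) and N(0, σ₂²) with σ₁², σ₂² > 0 is bounded above by √(2/(π σ₁²)) · |σ₁² − σ₂²|. -/

import Mathlib

/-!
Couple the two Gaussians through a single standard normal `X`: `N(0, v)` is the law of `√v X`.
For a 1-Lipschitz `h` this gives `|E h(√v₁ X) - E h(√v₂ X)| ≤ |√v₁ - √v₂| E|X|`, where
`E|X| = √(2/π)`, and `|√v₁ - √v₂| = |v₁ - v₂| / (√v₁ + √v₂) ≤ |v₁ - v₂| / √v₁`.
-/

open MeasureTheory ProbabilityTheory Real Set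
open scoped NNReal

theorem integral_Ioi_mul_exp_neg_mul_sq {b : ℝ} (hb : 0 < b) :
    ∫ r in Ioi (0 : ℝ), r * rexp (-b * r ^ 2) = (2 * b)⁻¹ := by
  have h := integral_mul_cexp_neg_mul_sq (b := (b : ℂ)) (by simpa using hb)
  exact_mod_cast (integral_complex_ofReal.symm.trans (by push_cast; exact h) :
    ((∫ r in Ioi (0 : ℝ), r * rexp (-b * r ^ 2) : ℝ) : ℂ) = ((2 * b)⁻¹ : ℝ))

theorem integral_abs_gaussianReal (v : ℝ≥0) :
    ∫ x, |x| ∂gaussianReal 0 v = √(2 * v / π) := by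
  rcases eq_or_ne v 0 with rfl | hv
  · simp [gaussianReal_zero_var]
  rw [integral_gaussianReal_eq_integral_smul hv]
  simp only [gaussianPDFReal, sub_zero, smul_eq_mul]
  have hpdf (x : ℝ) : (√(2 * π * v))⁻¹ * rexp (-x ^ 2 / (2 * v)) * |x|
      = (√(2 * π * v))⁻¹ * (|x| * rexp (-(2 * (v : ℝ))⁻¹ * |x| ^ 2)) := by
    rw [sq_abs]; ring_nf
  simp_rw [hpdf]
  rw [integral_const_mul, integral_comp_abs (f := fun x ↦ x * rexp (-(2 * (v : ℝ))⁻¹ * x ^ 2)),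
    integral_Ioi_mul_exp_neg_mul_sq (by positivity), eq_comm,
    sqrt_eq_iff_eq_sq (by positivity) (by positivity), mul_pow, inv_pow, sq_sqrt (by positivity)]
  field_simp

theorem gaussianReal_zero_eq_map_mul_sqrt (v : ℝ≥0) :
    gaussianReal 0 v = (gaussianReal 0 1).map (√v * ·) := by
  rw [gaussianReal_map_const_mul]
  congr
  · simp
  · ext; simp

theorem LipschitzWith.integrable_comp {α E F : Type*} [MeasurableSpace α] {μ : Measure α}
    [IsFiniteMeasure μ] [NormedAddCommGroup E] [NormedAddCommGroup F] {K : ℝ≥0} {g : E → F}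
    (hg : LipschitzWith K g) {f : α → E} (hf : Integrable f μ) :
    Integrable (fun x ↦ g (f x)) μ := by
  refine ((integrable_const ‖g 0‖).add (hf.norm.const_mul K)).mono'
    (hg.continuous.comp_aestronglyMeasurable hf.1) (ae_of_all _ fun x ↦ ?_)
  have hgf := hg.norm_sub_le (f x) 0
  rw [sub_zero] at hgf
  simp only [Pi.add_apply]
  linarith [norm_le_insert' (g (f x)) (g 0)]

theorem abs_integral_comp_mul_sub_le {μ : Measure ℝ} [IsFiniteMeasure μ] (hμ : Integrable id μ)
    {K : ℝ≥0} {h : ℝ → ℝ} (hh : LipschitzWith K h) (a b : ℝ) :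
    |∫ x, h (a * x) ∂μ - ∫ x, h (b * x) ∂μ| ≤ K * |a - b| * ∫ x, |x| ∂μ := by
  have hint (c : ℝ) : Integrable (fun x ↦ h (c * x)) μ := hh.integrable_comp (hμ.const_mul c)
  rw [← integral_sub (hint a) (hint b), ← integral_const_mul]
  refine abs_integral_le_integral_abs.trans
    (integral_mono ((hint a).sub (hint b)).abs (hμ.abs.const_mul _) fun x ↦ ?_)
  calc |h (a * x) - h (b * x)| ≤ K * |a * x - b * x| := by
        simpa only [Real.dist_eq] using hh.dist_le_mul (a * x) (b * x)
    _ = K * |a - b| * |x| := by rw [← sub_mul, abs_mul, mul_assoc]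

theorem abs_sqrt_sub_sqrt_le {a b : ℝ} (ha : 0 < a) (hb : 0 ≤ b) :
    |√a - √b| ≤ |a - b| / √a := by
  rw [le_div_iff₀ (sqrt_pos.2 ha)]
  have hab : |a - b| = |√a - √b| * (√a + √b) := by
    rw [← abs_of_nonneg (by positivity : 0 ≤ √a + √b), ← abs_mul]
    congr 1
    ring_nf
    rw [sq_sqrt ha.le, sq_sqrt hb]
  rw [hab]
  exact mul_le_mul_of_nonneg_left (le_add_of_nonneg_right (sqrt_nonneg b)) (abs_nonneg _)

theorem wasserstein_gaussian_bound_general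
    (v₁ v₂ : NNReal) (h₁ : 0 < v₁)
    (h : ℝ → ℝ) (hh : LipschitzWith 1 h) :
    |(∫ x, h x ∂(gaussianReal 0 v₁)) - ∫ x, h x ∂(gaussianReal 0 v₂)| ≤
      Real.sqrt (2 / (Real.pi * v₁)) * |(v₁ : ℝ) - (v₂ : ℝ)| := by
  rw [gaussianReal_zero_eq_map_mul_sqrt v₁, gaussianReal_zero_eq_map_mul_sqrt v₂,
    integral_map (by fun_prop) hh.continuous.aestronglyMeasurable,
    integral_map (by fun_prop) hh.continuous.aestronglyMeasurable]
  calc _ ≤ (1 : ℝ≥0) * |√v₁ - √v₂| * ∫ x, |x| ∂gaussianReal 0 1 :=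
        abs_integral_comp_mul_sub_le
          (MemLp.integrable le_rfl (memLp_id_gaussianReal' 1 ENNReal.one_ne_top)) hh _ _
    _ ≤ √(2 / π) * (|(v₁ : ℝ) - v₂| / √v₁) := by
        rw [integral_abs_gaussianReal, NNReal.coe_one, one_mul, mul_one, mul_comm]
        exact mul_le_mul_of_nonneg_left
          (abs_sqrt_sub_sqrt_le (by positivity) v₂.coe_nonneg) (sqrt_nonneg _)
    _ = √(2 / (π * v₁)) * |(v₁ : ℝ) - v₂| := by
        rw [div_mul_eq_div_div, sqrt_div' _ v₁.coe_nonneg]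
        ring

/-- The 1-Wasserstein distance between `N(0, v₁)` and `N(0, v₂)` (variances `v₁, v₂ > 0`)
is bounded by `√(2/(π v₁)) · |v₁ − v₂|`: every 1-Lipschitz test function discrepancy
obeys this bound. -/
theorem wasserstein_gaussian_bound
    (v₁ v₂ : NNReal) (h₁ : 0 < v₁) (h₂ : 0 < v₂)
    (h : ℝ → ℝ) (hh : LipschitzWith 1 h) :
    |(∫ x, h x ∂(gaussianReal 0 v₁)) - ∫ x, h x ∂(gaussianReal 0 v₂)| ≤
      Real.sqrt (2 / (Real.pi * v₁)) * |(v₁ : ℝ) - (v₂ : ℝ)| :=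
  wasserstein_gaussian_bound_general v₁ v₂ h₁ h hh
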